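/- Define M_n^k(x) = (Σ_{j=0}^{n} C(n,j) C_{k,n}(j) x_0^j \underline x^{n−j}) P_k(\underline x) with C_{k,n}(j) = (n−j)! / ∏_{s=0}^{n−j} β_k(s). Then each M_n^k is monogenic in ℝ^{m+1} and the Appell condition (1/2)\overline∂_x M_n^k = n M_{n−1}^k holds for all n ≥ 1, with M_0^k = P_k. -/

import Mathlib

/-!
Write `W_s = x^s P_k` (Clifford powers of the vector variable). The Clifford relation
`e_i x + x e_i = -2 x_i`, Euler's identity `E P_k = k P_k` and `∂_{\underline x} P_k = 0` give by
induction `∂_{\underline x} W_s = -γ_s W_{s-1}`, where `γ_0 = 0` and `γ_{s+1} = m + 2(s + k) - γ_s`,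
so that `γ_s = β_k(s)` for `s ≥ 1`. Differentiating `M_n^k = Σ_j C(n,j) C_{k,n}(j) x_0^j W_{n-j}`
termwise, the recursion `C_{k,n+1}(j) β_k(n+1-j) = (n+1-j) C_{k,n}(j)` makes both `∂_{x_0} M_n^k`
and `-∂_{\underline x} M_n^k` equal to `n M_{n-1}^k`: their difference is monogenicity, their sum
the Appell condition.
-/

open Finset

variable {m : ℕ} {A : Type*} [NormedRing A] [NormedAlgebra ℝ A]

/-- The Dirac operator ∂_{\underline x} = Σ_j e_j ∂_{x_j} on A-valued functions on ℝ^m,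
where `e : Fin m → A` are the Clifford generators acting by left multiplication. -/
noncomputable def Dirac (e : Fin m → A) (f : EuclideanSpace ℝ (Fin m) → A)
    (x : EuclideanSpace ℝ (Fin m)) : A :=
  ∑ j, e j * fderiv ℝ f x (EuclideanSpace.single j 1)

/-- The generalized Cauchy–Riemann operator ∂_x = ∂_{x_0} + Σ_j e_j ∂_{x_j}
on A-valued functions on ℝ^{m+1} = ℝ × ℝ^m. -/
noncomputable def CR (e : Fin m → A) (f : ℝ × EuclideanSpace ℝ (Fin m) → A)
    (p : ℝ × EuclideanSpace ℝ (Fin m)) : A :=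
  fderiv ℝ f p (1, 0) + ∑ j, e j * fderiv ℝ f p (0, EuclideanSpace.single j 1)

/-- The conjugate Cauchy–Riemann operator \overline∂_x = ∂_{x_0} − Σ_j e_j ∂_{x_j}. -/
noncomputable def CRbar (e : Fin m → A) (f : ℝ × EuclideanSpace ℝ (Fin m) → A)
    (p : ℝ × EuclideanSpace ℝ (Fin m)) : A :=
  fderiv ℝ f p (1, 0) - ∑ j, e j * fderiv ℝ f p (0, EuclideanSpace.single j 1)

/-- The Laplacian Δ = Σ_{j=0}^m ∂_{x_j}² on ℝ^{m+1} = ℝ × ℝ^m. -/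
noncomputable def Lap (f : ℝ × EuclideanSpace ℝ (Fin m) → A)
    (p : ℝ × EuclideanSpace ℝ (Fin m)) : A :=
  fderiv ℝ (fun q => fderiv ℝ f q (1, 0)) p (1, 0) +
    ∑ j, fderiv ℝ (fun q => fderiv ℝ f q (0, EuclideanSpace.single j 1)) p
      (0, EuclideanSpace.single j 1)

/-- The Clifford vector \underline x = Σ_j x_j e_j associated to x ∈ ℝ^m. -/
noncomputable def vec (e : Fin m → A) (x : EuclideanSpace ℝ (Fin m)) : A :=
  ∑ j, x j • e j

/-- g : ℝ^m → A is a polynomial map of degree at most d. -/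
def IsPolyDeg (d : ℕ) (g : EuclideanSpace ℝ (Fin m) → A) : Prop :=
  ∃ (S : Finset (Fin m →₀ ℕ)) (c : (Fin m →₀ ℕ) → A),
    (∀ α ∈ S, (α.sum fun _ n => n) ≤ d) ∧
    ∀ x, g x = ∑ α ∈ S, (∏ j, x j ^ α j) • c α

/-- β_k(0)=1, β_k(s)=s for even s ≥ 1, β_k(s)=2k+m+s−1 for odd s. -/
noncomputable def betak (m k : ℕ) (n : ℕ) : ℝ :=
  if n = 0 then 1 else if Even n then (n : ℝ) else (2 * k + m + n - 1 : ℝ)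

/-- C_{k,n}(j) = (n−j)! / ∏_{s=0}^{n−j} β_k(s). -/
noncomputable def Ckn (m k n j : ℕ) : ℝ :=
  ((n - j).factorial : ℝ) / ∏ s ∈ Finset.range (n - j + 1), betak m k s

/-- M_n^k(x) = (Σ_{j=0}^{n} C(n,j) C_{k,n}(j) x_0^j \underline x^{n−j}) P_k(\underline x). -/
noncomputable def Mnk (e : Fin m → A) (k : ℕ) (P : EuclideanSpace ℝ (Fin m) → A)
    (n : ℕ) (p : ℝ × EuclideanSpace ℝ (Fin m)) : A :=
  (∑ j ∈ Finset.range (n + 1),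
    ((n.choose j : ℝ) * Ckn m k n j) • (p.1 ^ j • vec e p.2 ^ (n - j))) * P p.2

lemma IsPolyDeg.differentiable {d : ℕ} {P : EuclideanSpace ℝ (Fin m) → A} (h : IsPolyDeg d P) :
    Differentiable ℝ P := by
  obtain ⟨S, c, -, hP⟩ := h
  rw [show P = _ from funext hP]
  fun_prop

/-- Euler's identity, obtained by differentiating `t ↦ P (t • x)` at `t = 1`. -/
lemma fderiv_apply_self_of_homogeneous {E F : Type*} [NormedAddCommGroup E] [NormedSpace ℝ E]
    [NormedAddCommGroup F] [NormedSpace ℝ F] {k : ℕ} {P : E → F} {x : E}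
    (hP : DifferentiableAt ℝ P x) (hhom : ∀ t : ℝ, P (t • x) = t ^ k • P x) :
    fderiv ℝ P x x = (k : ℝ) • P x := by
  have hcomp : HasDerivAt (fun t : ℝ => P (t • x)) (fderiv ℝ P x x) 1 := by
    have := (hasDerivAt_id (1 : ℝ)).smul_const x
    rw [← one_smul ℝ x] at hP
    simpa [Function.comp_def] using hP.hasFDerivAt.comp_hasDerivAt (1 : ℝ) this
  have hpow : HasDerivAt (fun t : ℝ => t ^ k • P x) ((k : ℝ) • P x) 1 := by
    simpa using (hasDerivAt_pow k (1 : ℝ)).smul_const (P x)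
  simp only [hhom] at hcomp
  exact hcomp.unique hpow

section CliffordVector

variable (e : Fin m → A)

noncomputable def vecL : EuclideanSpace ℝ (Fin m) →L[ℝ] A :=
  ∑ j, (EuclideanSpace.proj j : EuclideanSpace ℝ (Fin m) →L[ℝ] ℝ).smulRight (e j)

@[simp]
lemma vecL_apply (x : EuclideanSpace ℝ (Fin m)) : vecL e x = vec e x := by
  simp [vecL, vec]

lemma hasFDerivAt_vec (x : EuclideanSpace ℝ (Fin m)) : HasFDerivAt (vec e) (vecL e) x := by
  convert (vecL e).hasFDerivAt
  ext; simp

lemma differentiable_vec : Differentiable ℝ (vec e) :=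
  fun x => (hasFDerivAt_vec e x).differentiableAt

lemma vec_single (i : Fin m) : vec e (EuclideanSpace.single i 1) = e i := by
  simp [vec, ite_smul]

lemma sum_smul_single (x : EuclideanSpace ℝ (Fin m)) :
    ∑ i, x i • EuclideanSpace.single i (1 : ℝ) = x := by
  simpa [EuclideanSpace.basisFun_apply] using (EuclideanSpace.basisFun (Fin m) ℝ).sum_repr x

lemma fderiv_vec_mul {f : EuclideanSpace ℝ (Fin m) → A} {x : EuclideanSpace ℝ (Fin m)}
    (hf : DifferentiableAt ℝ f x) (v : EuclideanSpace ℝ (Fin m)) :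
    fderiv ℝ (fun y => vec e y * f y) x v = vec e v * f x + vec e x * fderiv ℝ f x v := by
  change fderiv ℝ (vec e * f) x v = _
  rw [((hasFDerivAt_vec e x).mul' hf.hasFDerivAt).fderiv]
  simp [add_comm]

lemma mul_vec_eq (he : ∀ j, e j * e j = -1) (hanti : ∀ j k, j ≠ k → e j * e k = -(e k * e j))
    (i : Fin m) (x : EuclideanSpace ℝ (Fin m)) :
    e i * vec e x = -(vec e x * e i) - (2 * x i) • (1 : A) := by
  have hterm : ∀ j, e i * (x j • e j) + x j • e j * e i
      = if j = i then (-(2 * x i)) • (1 : A) else 0 := by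
    intro j
    rw [mul_smul_comm, smul_mul_assoc]
    split_ifs with h
    · subst h; rw [he]; module
    · rw [hanti j i h]; module
  have hsum : e i * vec e x + vec e x * e i = (-(2 * x i)) • (1 : A) := by
    rw [vec, mul_sum, sum_mul, ← sum_add_distrib]
    simp only [hterm, sum_ite_eq', mem_univ, if_true]
  rw [eq_sub_of_add_eq hsum]
  module

lemma dirac_vec_mul (he : ∀ j, e j * e j = -1) (hanti : ∀ j k, j ≠ k → e j * e k = -(e k * e j))
    {f : EuclideanSpace ℝ (Fin m) → A} {x : EuclideanSpace ℝ (Fin m)}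
    (hf : DifferentiableAt ℝ f x) :
    Dirac e (fun y => vec e y * f y) x
      = -(m : ℝ) • f x - vec e x * Dirac e f x - (2 : ℝ) • fderiv ℝ f x x := by
  have hcoords : ∑ i, x i • fderiv ℝ f x (EuclideanSpace.single i 1) = fderiv ℝ f x x := by
    calc _ = fderiv ℝ f x (∑ i, x i • EuclideanSpace.single i (1 : ℝ)) := by
          simp only [map_sum, map_smul]
      _ = _ := by rw [sum_smul_single]
  calc Dirac e (fun y => vec e y * f y) x
      = ∑ i, (e i * e i * f x + e i * vec e x * fderiv ℝ f x (EuclideanSpace.single i 1)) := by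
        simp only [Dirac, fderiv_vec_mul e hf, vec_single, mul_add, mul_assoc]
    _ = ∑ i, (-f x - vec e x * (e i * fderiv ℝ f x (EuclideanSpace.single i 1))
          - (2 : ℝ) • (x i • fderiv ℝ f x (EuclideanSpace.single i 1))) := by
        refine sum_congr rfl fun i _ => ?_
        rw [he, mul_vec_eq e he hanti]
        simp only [sub_mul, neg_mul, one_mul, smul_mul_assoc, mul_assoc]
        module
    _ = _ := by
        simp only [sum_sub_distrib, sum_neg_distrib, ← mul_sum,
          ← smul_sum, hcoords, Dirac, sum_const, card_univ, Fintype.card_fin]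
        module

end CliffordVector

noncomputable def vecPowMul (e : Fin m → A) (P : EuclideanSpace ℝ (Fin m) → A) (s : ℕ)
    (x : EuclideanSpace ℝ (Fin m)) : A :=
  vec e x ^ s * P x

noncomputable def gammak (m k s : ℕ) : ℝ := if s = 0 then 0 else betak m k s

lemma gammak_zero (m k : ℕ) : gammak m k 0 = 0 := if_pos rfl

lemma gammak_of_ne_zero {m k s : ℕ} (hs : s ≠ 0) : gammak m k s = betak m k s := if_neg hs

lemma gammak_succ (m k s : ℕ) : gammak m k (s + 1) = m + 2 * (s + k) - gammak m k s := by
  rcases Nat.even_or_odd s with hs | hs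
  · have hs1 : ¬Even (s + 1) := by simpa [Nat.even_add_one] using hs
    rcases eq_or_ne s 0 with rfl | h0
    · simp [gammak, betak]; ring
    simp [gammak, betak, h0, hs, hs1]; ring
  · have hs1 : Even (s + 1) := by simpa [Nat.even_add_one, Nat.not_even_iff_odd] using hs
    simp [gammak, betak, hs.pos.ne', Nat.not_even_iff_odd.mpr hs, hs1]; ring

section VecPowMul

variable (e : Fin m → A) {k : ℕ} {P : EuclideanSpace ℝ (Fin m) → A}

lemma vecPowMul_zero : vecPowMul e P 0 = P := by
  ext x; simp [vecPowMul]

lemma vecPowMul_succ (s : ℕ) :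
    vecPowMul e P (s + 1) = fun y => vec e y * vecPowMul e P s y := by
  ext y; simp [vecPowMul, pow_succ', mul_assoc]

lemma differentiable_vecPowMul (hP : Differentiable ℝ P) (s : ℕ) :
    Differentiable ℝ (vecPowMul e P s) :=
  ((differentiable_vec e).pow s).mul hP

lemma fderiv_vecPowMul_apply_self (hP : Differentiable ℝ P)
    (hEuler : ∀ x, fderiv ℝ P x x = (k : ℝ) • P x) (s : ℕ) (x : EuclideanSpace ℝ (Fin m)) :
    fderiv ℝ (vecPowMul e P s) x x = ((s : ℝ) + k) • vecPowMul e P s x := by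
  induction s with
  | zero => simp [vecPowMul_zero, hEuler]
  | succ s ih =>
    rw [vecPowMul_succ, fderiv_vec_mul e (differentiable_vecPowMul e hP s x), ih,
      ← vecPowMul_succ]
    simp only [vecPowMul_succ, mul_smul_comm]
    push_cast
    module

lemma dirac_vecPowMul (he : ∀ j, e j * e j = -1)
    (hanti : ∀ j k, j ≠ k → e j * e k = -(e k * e j)) (hP : Differentiable ℝ P)
    (hEuler : ∀ x, fderiv ℝ P x x = (k : ℝ) • P x) (hmono : ∀ x, Dirac e P x = 0)
    (s : ℕ) (x : EuclideanSpace ℝ (Fin m)) :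
    Dirac e (vecPowMul e P s) x = -gammak m k s • vecPowMul e P (s - 1) x := by
  induction s with
  | zero => simp [vecPowMul_zero, hmono, gammak_zero]
  | succ s ih =>
    rw [vecPowMul_succ, dirac_vec_mul e he hanti (differentiable_vecPowMul e hP s x), ih,
      fderiv_vecPowMul_apply_self e hP hEuler, gammak_succ, mul_smul_comm]
    rcases s with _ | s
    · simp [gammak_zero]; module
    · rw [Nat.add_sub_cancel, show vec e x * vecPowMul e P s x = vecPowMul e P (s + 1) x by
        rw [vecPowMul_succ]]
      push_cast
      module

end VecPowMul

section Coefficients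

variable {k : ℕ}

lemma betak_pos (hkm : 1 ≤ 2 * k + m) (s : ℕ) : 0 < betak m k s := by
  unfold betak
  split_ifs with h0 hev
  · exact one_pos
  · exact_mod_cast Nat.pos_of_ne_zero h0
  · have h1 : (1 : ℝ) ≤ 2 * k + m := by exact_mod_cast hkm
    have h2 : (1 : ℝ) ≤ s := by exact_mod_cast Nat.one_le_iff_ne_zero.mpr h0
    linarith

lemma Ckn_succ_succ (n j : ℕ) : Ckn m k (n + 1) (j + 1) = Ckn m k n j := by
  simp [Ckn]

lemma Ckn_succ_mul_betak (hkm : 1 ≤ 2 * k + m) {n j : ℕ} (hj : j ≤ n) :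
    Ckn m k (n + 1) j * betak m k (n + 1 - j) = ((n + 1 - j : ℕ) : ℝ) * Ckn m k n j := by
  obtain ⟨d, rfl⟩ := Nat.exists_eq_add_of_le hj
  have hprod : ∏ s ∈ range (d + 1), betak m k s ≠ 0 :=
    (prod_pos fun s _ => betak_pos hkm s).ne'
  have hβ : betak m k (d + 1) ≠ 0 := (betak_pos hkm _).ne'
  rw [Ckn, Ckn, show j + d + 1 - j = d + 1 by omega, Nat.add_sub_cancel_left, prod_range_succ,
    Nat.factorial_succ]
  push_cast
  field_simp

lemma choose_mul_Ckn_succ_succ (n j : ℕ) :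
    ((n + 1).choose (j + 1) : ℝ) * Ckn m k (n + 1) (j + 1) * (j + 1)
      = (n + 1) * ((n.choose j : ℝ) * Ckn m k n j) := by
  have h := Nat.add_one_mul_choose_eq n j
  rw [Ckn_succ_succ]
  have h' : ((n + 1 : ℕ) : ℝ) * n.choose j
      = ((n + 1).choose (j + 1) : ℕ) * ((j + 1 : ℕ) : ℝ) := by
    exact_mod_cast h
  push_cast at h'
  linear_combination (Ckn m k n j) * (-h')

lemma choose_mul_Ckn_succ_mul_betak (hkm : 1 ≤ 2 * k + m) {n j : ℕ} (hj : j ≤ n) :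
    ((n + 1).choose j : ℝ) * Ckn m k (n + 1) j * betak m k (n + 1 - j)
      = (n + 1) * ((n.choose j : ℝ) * Ckn m k n j) := by
  have h : (n.choose j : ℝ) * (n + 1) = ((n + 1).choose j : ℝ) * ((n + 1 - j : ℕ) : ℝ) := by
    exact_mod_cast Nat.choose_mul_succ_eq n j
  rw [mul_assoc, Ckn_succ_mul_betak hkm hj]
  linear_combination (Ckn m k n j) * (-h)

end Coefficients

lemma hasFDerivAt_pow_fst_smul {E F : Type*} [NormedAddCommGroup E] [NormedSpace ℝ E]
    [NormedAddCommGroup F] [NormedSpace ℝ F] {g : E → F} {p : ℝ × E}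
    (hg : DifferentiableAt ℝ g p.2) (j : ℕ) :
    HasFDerivAt (fun q : ℝ × E => q.1 ^ j • g q.2)
      (p.1 ^ j • (fderiv ℝ g p.2).comp (ContinuousLinearMap.snd ℝ ℝ E)
        + ((j * p.1 ^ (j - 1)) • ContinuousLinearMap.fst ℝ ℝ E).smulRight (g p.2)) p := by
  have hpow : HasFDerivAt (fun q : ℝ × E => q.1 ^ j)
      ((j * p.1 ^ (j - 1)) • ContinuousLinearMap.fst ℝ ℝ E) p := by
    simpa [Function.comp_def] using (hasDerivAt_pow j p.1).comp_hasFDerivAt p hasFDerivAt_fst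
  exact hpow.smul (hg.hasFDerivAt.comp p hasFDerivAt_snd)

noncomputable def spatialDirac (e : Fin m → A) (f : ℝ × EuclideanSpace ℝ (Fin m) → A)
    (p : ℝ × EuclideanSpace ℝ (Fin m)) : A :=
  ∑ j, e j * fderiv ℝ f p (0, EuclideanSpace.single j 1)

section Mnk

variable (e : Fin m → A) {k : ℕ} {P : EuclideanSpace ℝ (Fin m) → A}

lemma CR_eq_add_spatialDirac (f : ℝ × EuclideanSpace ℝ (Fin m) → A) (p) :
    CR e f p = fderiv ℝ f p (1, 0) + spatialDirac e f p := rfl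

lemma CRbar_eq_sub_spatialDirac (f : ℝ × EuclideanSpace ℝ (Fin m) → A) (p) :
    CRbar e f p = fderiv ℝ f p (1, 0) - spatialDirac e f p := rfl

lemma Mnk_zero (p : ℝ × EuclideanSpace ℝ (Fin m)) : Mnk e k P 0 p = P p.2 := by
  simp [Mnk, Ckn, betak]

lemma Mnk_eq_sum (n : ℕ) :
    Mnk e k P n = fun q => ∑ j ∈ range (n + 1),
      ((n.choose j : ℝ) * Ckn m k n j) • (q.1 ^ j • vecPowMul e P (n - j) q.2) := by
  ext q
  simp only [Mnk, vecPowMul, sum_mul, smul_mul_assoc]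

lemma fderiv_Mnk (hP : Differentiable ℝ P) (n : ℕ) (p v : ℝ × EuclideanSpace ℝ (Fin m)) :
    fderiv ℝ (Mnk e k P n) p v = ∑ j ∈ range (n + 1), ((n.choose j : ℝ) * Ckn m k n j) •
      (p.1 ^ j • fderiv ℝ (vecPowMul e P (n - j)) p.2 v.2
        + (v.1 * (j * p.1 ^ (j - 1))) • vecPowMul e P (n - j) p.2) := by
  have hterm := fun j => hasFDerivAt_pow_fst_smul (p := p)
    (differentiable_vecPowMul e hP (n - j) p.2) j
  have hsum := HasFDerivAt.fun_sum (u := range (n + 1)) (A := fun j (q : ℝ × _) =>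
    ((n.choose j : ℝ) * Ckn m k n j) • (q.1 ^ j • vecPowMul e P (n - j) q.2))
    fun j _ => (hterm j).const_smul ((n.choose j : ℝ) * Ckn m k n j)
  rw [Mnk_eq_sum, hsum.fderiv]
  simp [mul_comm]

lemma fderiv_Mnk_fst (hP : Differentiable ℝ P) (n : ℕ) (p : ℝ × EuclideanSpace ℝ (Fin m)) :
    fderiv ℝ (Mnk e k P n) p (1, 0) = (n : ℝ) • Mnk e k P (n - 1) p := by
  rw [fderiv_Mnk e hP]
  simp only [map_zero, smul_zero, zero_add, one_mul]
  rcases n with _ | n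
  · simp
  rw [sum_range_succ', Mnk_eq_sum, smul_sum]
  simp only [CharP.cast_eq_zero, zero_mul, zero_smul, smul_zero, add_zero, Nat.add_sub_cancel]
  refine sum_congr rfl fun j _ => ?_
  rw [Nat.add_sub_add_right]
  simp only [smul_smul]
  congr 1
  push_cast
  linear_combination p.1 ^ j * choose_mul_Ckn_succ_succ n j

lemma spatialDirac_Mnk (hkm : 1 ≤ 2 * k + m) (he : ∀ j, e j * e j = -1)
    (hanti : ∀ j k, j ≠ k → e j * e k = -(e k * e j)) (hP : Differentiable ℝ P)
    (hEuler : ∀ x, fderiv ℝ P x x = (k : ℝ) • P x) (hmono : ∀ x, Dirac e P x = 0)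
    (n : ℕ) (p : ℝ × EuclideanSpace ℝ (Fin m)) :
    spatialDirac e (Mnk e k P n) p = -(n : ℝ) • Mnk e k P (n - 1) p := by
  have hsum : spatialDirac e (Mnk e k P n) p = ∑ j ∈ range (n + 1),
      ((n.choose j : ℝ) * Ckn m k n j) • (p.1 ^ j • Dirac e (vecPowMul e P (n - j)) p.2) := by
    simp only [spatialDirac, fderiv_Mnk e hP, zero_mul, zero_smul, add_zero, mul_sum,
      mul_smul_comm, Dirac, smul_sum]
    exact sum_comm
  simp only [hsum, dirac_vecPowMul e he hanti hP hEuler hmono]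
  rcases n with _ | n
  · simp [gammak_zero]
  rw [sum_range_succ, Mnk_eq_sum, smul_sum]
  simp only [Nat.sub_self, gammak_zero, neg_zero, zero_smul, smul_zero, add_zero,
    Nat.add_sub_cancel]
  refine sum_congr rfl fun j hjn => ?_
  have hj : j ≤ n := Nat.lt_succ_iff.mp (mem_range.mp hjn)
  rw [gammak_of_ne_zero (by omega), show n + 1 - j - 1 = n - j by omega]
  simp only [smul_smul]
  congr 1
  push_cast
  linear_combination -p.1 ^ j * choose_mul_Ckn_succ_mul_betak hkm hj

end Mnk

/-- each M_n^k is monogenic in ℝ^{m+1}, M_0^k = P_k, and the Appell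
condition (1/2)\overline∂_x M_n^k = n M_{n−1}^k holds for n ≥ 1. -/
theorem stmt14 (e : Fin m → A)
    (he : ∀ j, e j * e j = -1)
    (hanti : ∀ j k, j ≠ k → e j * e k = -(e k * e j))
    (k : ℕ) (hkm : 1 ≤ 2 * k + m)
    (P : EuclideanSpace ℝ (Fin m) → A)
    (hPpoly : IsPolyDeg k P)
    (hhom : ∀ (t : ℝ) (x : EuclideanSpace ℝ (Fin m)), P (t • x) = t ^ k • P x)
    (hmono : ∀ x, Dirac e P x = 0) :
    (∀ p, Mnk e k P 0 p = P p.2) ∧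
    (∀ n p, CR e (Mnk e k P n) p = 0) ∧
    (∀ n : ℕ, 1 ≤ n → ∀ p,
      (1 / 2 : ℝ) • CRbar e (Mnk e k P n) p = (n : ℝ) • Mnk e k P (n - 1) p) := by
  have hP : Differentiable ℝ P := hPpoly.differentiable
  have hEuler : ∀ x, fderiv ℝ P x x = (k : ℝ) • P x := fun x =>
    fderiv_apply_self_of_homogeneous (hP x) (hhom · x)
  have hfst := fderiv_Mnk_fst e (k := k) hP
  have hdirac := spatialDirac_Mnk e hkm he hanti hP hEuler hmono
  refine ⟨Mnk_zero e, fun n p => ?_, fun n _ p => ?_⟩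
  · rw [CR_eq_add_spatialDirac, hfst, hdirac, neg_smul, add_neg_cancel]
  · rw [CRbar_eq_sub_spatialDirac, hfst, hdirac]
    module
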